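/- arXiv:2103.01338 — 2 statements merged into one kernel-verified Lean document; each statement's English description precedes it below -/
import Mathlib

section
/- Let θ > 1 and α ∈ [π/2, π). Then the maximum of |P_{n,α}(z)| over z ∈ [-1,1] is at most 2/(n²(θ - 1)) for every positive integer n. -/
open Real

/-- `cheb n x` is the value at `x` of the `n`-th Chebyshev polynomial of the first kind. -/
noncomputable def cheb (n : ℕ) (x : ℝ) : ℝ := (Polynomial.Chebyshev.T ℝ n).eval x

lemma cheb_rec (n : ℕ) (x : ℝ) :
    cheb (n + 2) x = 2 * x * cheb (n + 1) x - cheb n x := by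
  unfold cheb
  have : ((n + 2 : ℕ) : ℤ) = (n : ℤ) + 2 := by push_cast; ring
  rw [this, Polynomial.Chebyshev.T_add_two]
  push_cast [Polynomial.eval_sub, Polynomial.eval_mul]
  simp

lemma cheb_growth (x : ℝ) (hx : 1 ≤ x) : ∀ n : ℕ,
    cheb (n + 1) x - cheb n x ≥ (2 * n + 1) * (x - 1) ∧
    cheb n x ≥ 1 + (n : ℝ) ^ 2 * (x - 1) := by
  intro n
  induction n with
  | zero =>
    constructor <;> simp [cheb, Polynomial.Chebyshev.T_zero, Polynomial.Chebyshev.T_one]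
  | succ k ih =>
    obtain ⟨h1, h2⟩ := ih
    have hk2 : cheb (k + 1) x ≥ 1 + ((k : ℝ) + 1) ^ 2 * (x - 1) := by nlinarith
    have hrec := cheb_rec k x
    constructor
    · have : cheb (k + 2) x - cheb (k + 1) x
          = (2 * x - 2) * cheb (k + 1) x + (cheb (k + 1) x - cheb k x) := by
        rw [hrec]; ring
      have hx2 : (0:ℝ) ≤ 2 * x - 2 := by linarith
      have h3 : (2*x-2) * cheb (k+1) x ≥ (2*x-2) * (1 + ((k:ℝ)+1)^2*(x-1)) :=
        mul_le_mul_of_nonneg_left hk2 hx2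
      push_cast
      show cheb (k + 2) x - cheb (k+1) x ≥ (2 * ((k:ℝ) + 1) + 1) * (x - 1)
      nlinarith [sq_nonneg (((k:ℝ)+1)*(x-1)), h3, this, h1]
    · push_cast at hk2 ⊢
      exact hk2

lemma abs_cheb_le_one (n : ℕ) (z : ℝ) (hz : z ∈ Set.Icc (-1 : ℝ) 1) :
    |cheb n z| ≤ 1 := by
  have h : z = Real.cos (Real.arccos z) := (Real.cos_arccos hz.1 hz.2).symm
  rw [cheb, h, Polynomial.Chebyshev.T_real_cos]
  exact Real.abs_cos_le_one _

theorem bad_skewed_cheb_bound (θ : ℝ) (hθ : 1 < θ) (α : ℝ) (hα : α ∈ Set.Ico (π / 2) π)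
    (n : ℕ) (hn : 1 ≤ n) (z : ℝ) (hz : z ∈ Set.Icc (-1 : ℝ) 1) :
    |(cheb n z - Real.cos α) / (cheb n θ - Real.cos α)| ≤ 2 / ((n : ℝ) ^ 2 * (θ - 1)) := by
  have hcosle : Real.cos α ≤ 0 := by
    apply Real.cos_nonpos_of_pi_div_two_le_of_le hα.1
    nlinarith [hα.2.le, Real.pi_pos]
  have hcosge : -1 ≤ Real.cos α := Real.neg_one_le_cos α
  have hTθ : cheb n θ ≥ 1 + (n : ℝ) ^ 2 * (θ - 1) := (cheb_growth θ hθ.le n).2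
  have hn1 : (1 : ℝ) ≤ (n : ℝ) := by exact_mod_cast hn
  have hden : (n : ℝ) ^ 2 * (θ - 1) > 0 :=
    mul_pos (pow_pos (by linarith) 2) (by linarith)
  have hD : cheb n θ - Real.cos α ≥ (n : ℝ) ^ 2 * (θ - 1) := by nlinarith
  have hDpos : 0 < cheb n θ - Real.cos α := lt_of_lt_of_le hden hD
  have hNz : |cheb n z| ≤ 1 := abs_cheb_le_one n z hz
  have hN : |cheb n z - Real.cos α| ≤ 2 := by
    have := abs_sub_abs_le_abs_sub (cheb n z) (Real.cos α)
    have h2 : |Real.cos α| ≤ 1 := Real.abs_cos_le_one α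
    calc |cheb n z - Real.cos α| ≤ |cheb n z| + |Real.cos α| := abs_sub _ _
      _ ≤ 2 := by linarith
  rw [abs_div, abs_of_pos hDpos]
  exact div_le_div₀ (by norm_num) hN hden hD
end

section
/- Let 0 < α < π/2, let n ≥ 2 and r ≥ 1 be integers, and θ > 1. Define B_{k,β} := max over z ∈ [-1,1] of |(T_k(z) - cos β)/(T_k(θ) - cos β)|. Then B_{nr, α} · B_{r, (π-α)/n} ≤ B_{nr, π-α} · B_{r, α/n}. -/
open Real

/-- The sup-norm on `[-1,1]` of the skewed Chebyshev polynomial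
`P_{k,β}(z) = (T_k(z) - cos β)/(T_k(θ) - cos β)`. -/
noncomputable def skewBound (θ : ℝ) (k : ℕ) (β : ℝ) : ℝ :=
  sSup ((fun z => |(cheb k z - Real.cos β) / (cheb k θ - Real.cos β)|) '' Set.Icc (-1 : ℝ) 1)

lemma cheb_cos (k : ℕ) (t : ℝ) : cheb k (Real.cos t) = Real.cos (k * t) := by
  unfold cheb
  rw [Polynomial.Chebyshev.T_real_cos t (k : ℤ)]
  norm_num

lemma cheb_cosh (k : ℕ) (t : ℝ) : cheb k (Real.cosh t) = Real.cosh (k * t) := by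
  apply Complex.ofReal_injective
  have h := Polynomial.Chebyshev.T_complex_cos (t * Complex.I) k
  rw [Complex.cos_mul_I] at h
  have h2 : ((k : ℤ) : ℂ) * (t * Complex.I) = ((k : ℝ) * t : ℝ) * Complex.I := by
    push_cast; ring
  rw [h2, Complex.cos_mul_I] at h
  rw [show ((cheb k (Real.cosh t) : ℝ) : ℂ) = (Polynomial.Chebyshev.T ℂ k).eval ((Real.cosh t : ℝ) : ℂ) from Polynomial.Chebyshev.complex_ofReal_eval_T _ _]
  rw [Complex.ofReal_cosh, h, Complex.ofReal_cosh]

lemma cheb_mul (n r : ℕ) (x : ℝ) : cheb (n * r) x = cheb n (cheb r x) := by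
  unfold cheb
  rw [show ((n * r : ℕ) : ℤ) = (n : ℤ) * (r : ℤ) by push_cast; ring,
    Polynomial.Chebyshev.T_mul, Polynomial.eval_comp]

lemma exists_cosh_eq {θ : ℝ} (hθ : 1 < θ) : ∃ s > 0, Real.cosh s = θ := by
  refine ⟨Real.arsinh (Real.sqrt (θ ^ 2 - 1)), ?_, ?_⟩
  · exact Real.arsinh_pos_iff.mpr (Real.sqrt_pos.mpr (by nlinarith))
  · rw [Real.cosh_arsinh, Real.sq_sqrt (by nlinarith)]
    rw [show 1 + (θ ^ 2 - 1) = θ ^ 2 by ring, Real.sqrt_sq (by linarith)]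

lemma one_lt_cheb {θ : ℝ} (hθ : 1 < θ) {k : ℕ} (hk : 1 ≤ k) : 1 < cheb k θ := by
  obtain ⟨s, hs, rfl⟩ := exists_cosh_eq hθ
  rw [cheb_cosh, Real.one_lt_cosh]
  have : (0:ℝ) < k := by exact_mod_cast Nat.pos_of_ne_zero (by omega)
  positivity

lemma abs_cheb_le {k : ℕ} {z : ℝ} (hz : z ∈ Set.Icc (-1:ℝ) 1) : |cheb k z| ≤ 1 := by
  have h := Real.cos_arccos hz.1 hz.2
  rw [← h, cheb_cos]
  exact Real.abs_cos_le_one _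

lemma skewBound_eq {θ : ℝ} (hθ : 1 < θ) {k : ℕ} (hk : 1 ≤ k) (β : ℝ) :
    sSup ((fun z => |(cheb k z - Real.cos β) / (cheb k θ - Real.cos β)|) '' Set.Icc (-1 : ℝ) 1)
      = (1 + |Real.cos β|) / (cheb k θ - Real.cos β) := by
  have hD : 0 < cheb k θ - Real.cos β := by
    have := one_lt_cheb hθ hk
    have := Real.cos_le_one β
    linarith
  apply IsGreatest.csSup_eq
  constructor
  · rcases le_or_gt 0 (Real.cos β) with h | h
    · refine ⟨Real.cos (π / k), ⟨Real.neg_one_le_cos _, Real.cos_le_one _⟩, ?_⟩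
      have hk0 : (k:ℝ) ≠ 0 := Nat.cast_ne_zero.mpr (by omega)
      dsimp only
      rw [cheb_cos, show (k:ℝ) * (π / k) = π by field_simp, Real.cos_pi]
      rw [abs_div, abs_of_pos hD, abs_of_nonpos (by linarith [Real.cos_le_one β] : (-1:ℝ) - Real.cos β ≤ 0), abs_of_nonneg h]
      ring_nf
    · refine ⟨1, ⟨by norm_num, le_refl 1⟩, ?_⟩
      have h1 : cheb k 1 = 1 := by
        simpa using cheb_cos k 0
      dsimp only
      rw [h1, abs_div, abs_of_pos hD,
        abs_of_nonneg (by linarith : (0:ℝ) ≤ 1 - Real.cos β), abs_of_neg h]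
      ring_nf
  · rintro x ⟨z, hz, rfl⟩
    dsimp only
    rw [abs_div, abs_of_pos hD, div_le_div_iff_of_pos_right hD]
    calc |cheb k z - Real.cos β| ≤ |cheb k z| + |Real.cos β| := abs_sub _ _
    _ ≤ 1 + |Real.cos β| := by linarith [abs_cheb_le (k := k) hz]

lemma sin_nat_mul_le (k : ℕ) {x : ℝ} (hx : 0 ≤ x) (hx2 : x ≤ π) :
    |Real.sin ((k:ℝ) * x)| ≤ (k:ℝ) * Real.sin x := by
  induction k with
  | zero => simp
  | succ m ih =>
    have hs : 0 ≤ Real.sin x := Real.sin_nonneg_of_nonneg_of_le_pi hx hx2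
    have h1 : Real.sin (((m+1:ℕ) : ℝ) * x) = Real.sin ((m:ℝ)*x) * Real.cos x + Real.cos ((m:ℝ)*x) * Real.sin x := by
      push_cast
      rw [add_mul, one_mul, Real.sin_add]
    rw [h1]
    push_cast
    calc |Real.sin ((m:ℝ)*x) * Real.cos x + Real.cos ((m:ℝ)*x) * Real.sin x|
        ≤ |Real.sin ((m:ℝ)*x) * Real.cos x| + |Real.cos ((m:ℝ)*x) * Real.sin x| := abs_add_le _ _
      _ ≤ (m:ℝ) * Real.sin x + 1 * Real.sin x := by
          rw [abs_mul, abs_mul]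
          have h2 : |Real.sin ((m:ℝ)*x)| * |Real.cos x| ≤ (m:ℝ) * Real.sin x :=
            le_trans (mul_le_of_le_one_right (abs_nonneg _) (Real.abs_cos_le_one _)) ih
          have h3 : |Real.cos ((m:ℝ)*x)| * |Real.sin x| ≤ 1 * Real.sin x := by
            rw [abs_of_nonneg hs, one_mul]
            exact mul_le_of_le_one_left hs (Real.abs_cos_le_one _)
          linarith
      _ = ((m:ℝ) + 1) * Real.sin x := by ring

lemma nat_mul_sinh_le (k : ℕ) {w : ℝ} (hw : 0 ≤ w) :
    (k:ℝ) * Real.sinh w ≤ Real.sinh ((k:ℝ) * w) := by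
  induction k with
  | zero => simp
  | succ m ih =>
    have h1 : Real.sinh (((m+1:ℕ) : ℝ) * w) = Real.sinh ((m:ℝ)*w) * Real.cosh w + Real.cosh ((m:ℝ)*w) * Real.sinh w := by
      push_cast
      rw [add_mul, one_mul, Real.sinh_add]
    have hc : 1 ≤ Real.cosh w := Real.one_le_cosh w
    have hc2 : 1 ≤ Real.cosh ((m:ℝ)*w) := Real.one_le_cosh _
    have hsh : 0 ≤ Real.sinh ((m:ℝ)*w) := Real.sinh_nonneg_iff.mpr (by positivity)
    have hsw : 0 ≤ Real.sinh w := Real.sinh_nonneg_iff.mpr hw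
    rw [h1]
    push_cast
    nlinarith [ih]

lemma nat_tan_superadd {a : ℝ} (ha : 0 ≤ a) :
    ∀ k : ℕ, (k:ℝ) * a ≤ π/2 →
      (k:ℝ) * Real.sin a * Real.cos ((k:ℝ)*a) ≤ Real.sin ((k:ℝ)*a) * Real.cos a := by
  intro k
  induction k with
  | zero => intro _; simp
  | succ m ih =>
    intro hka
    have hm1 : ((m+1:ℕ):ℝ) = (m:ℝ) + 1 := by push_cast; ring
    have hm0 : (0:ℝ) ≤ (m:ℝ) := Nat.cast_nonneg m
    have haa : a ≤ ((m:ℝ)+1) * a := by nlinarith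
    have ha2 : a ≤ π/2 := by rw [hm1] at hka; linarith
    have hma : (m:ℝ)*a ≤ π/2 := by rw [hm1] at hka; nlinarith
    have H := ih hma
    have hcos : 0 ≤ Real.cos a := Real.cos_nonneg_of_mem_Icc ⟨by linarith, ha2⟩
    have hsinma : 0 ≤ Real.sin ((m:ℝ)*a) :=
      Real.sin_nonneg_of_nonneg_of_le_pi (by positivity) (by linarith [Real.pi_pos])
    have hsina : 0 ≤ Real.sin a :=
      Real.sin_nonneg_of_nonneg_of_le_pi ha (by linarith [Real.pi_pos])
    have e1 : Real.sin (((m+1:ℕ) : ℝ) * a) = Real.sin ((m:ℝ)*a) * Real.cos a + Real.cos ((m:ℝ)*a) * Real.sin a := by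
      rw [hm1, add_mul, one_mul, Real.sin_add]
    have e2 : Real.cos (((m+1:ℕ) : ℝ) * a) = Real.cos ((m:ℝ)*a) * Real.cos a - Real.sin ((m:ℝ)*a) * Real.sin a := by
      rw [hm1, add_mul, one_mul, Real.cos_add]
    rw [e1, e2, hm1]
    nlinarith [mul_nonneg hcos (sub_nonneg.mpr H),
      mul_nonneg (mul_nonneg hsina hsina) hsinma]


lemma algA {nR s₁ c₁ S C sh SH : ℝ} (hs₁ : 0 ≤ s₁) (hc₁ : 0 ≤ c₁) (hc₁1 : c₁ ≤ 1)
    (hsh : 0 ≤ sh) (hn : 0 ≤ nR)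
    (F1 : S * C ≤ nR * (s₁ * c₁)) (F2 : nR * sh ≤ SH) :
    nR * (S*C) * (c₁^2 * sh^2) ≤ (1 + sh^2) * (s₁*c₁) * SH^2 := by
  have hcs : 0 ≤ c₁^2 * sh^2 := mul_nonneg (sq_nonneg _) (sq_nonneg _)
  have k1 : nR * (S*C) * (c₁^2 * sh^2) ≤ nR * (nR*(s₁*c₁)) * (c₁^2 * sh^2) := by
    nlinarith [mul_le_mul_of_nonneg_right F1 (mul_nonneg hn hcs)]
  have hc2 : c₁^2 ≤ 1 := by nlinarith
  have hx : 0 ≤ nR^2*sh^2*(s₁*c₁) :=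
    mul_nonneg (mul_nonneg (sq_nonneg _) (sq_nonneg _)) (mul_nonneg hs₁ hc₁)
  have k2 : nR * (nR*(s₁*c₁)) * (c₁^2 * sh^2) ≤ nR^2*sh^2*(s₁*c₁) := by
    nlinarith [mul_le_mul_of_nonneg_left hc2 hx]
  have k3 : nR^2*sh^2 ≤ SH^2 := by
    nlinarith [mul_self_le_mul_self (mul_nonneg hn hsh) F2]
  have k4 : nR^2*sh^2*(s₁*c₁) ≤ SH^2*(s₁*c₁) :=
    mul_le_mul_of_nonneg_right k3 (mul_nonneg hs₁ hc₁)
  have k5 : SH^2*(s₁*c₁) ≤ (1 + sh^2) * (s₁*c₁) * SH^2 := by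
    nlinarith [mul_nonneg (mul_nonneg (mul_nonneg hs₁ hc₁) (sq_nonneg sh)) (sq_nonneg SH)]
  linarith

lemma algB {nR s₁ c₁ S C sh : ℝ} (hs₁ : 0 ≤ s₁) (hc₁ : 0 ≤ c₁) (hc₁1 : c₁ ≤ 1)
    (hS : 0 ≤ S) (F3 : nR * s₁ * C ≤ S * c₁) :
    nR * (S*C) * (c₁^2 * s₁^2) ≤ (1 + sh^2) * (s₁*c₁) * S^2 := by
  have hw : 0 ≤ S*s₁*c₁*c₁ := mul_nonneg (mul_nonneg (mul_nonneg hS hs₁) hc₁) hc₁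
  have m1 := mul_le_mul_of_nonneg_right F3 hw
  have hc2 : c₁^2 ≤ 1 := by nlinarith
  have pos : 0 ≤ s₁*c₁*S^2*(1 + sh^2 - c₁^2) :=
    mul_nonneg (mul_nonneg (mul_nonneg hs₁ hc₁) (sq_nonneg S)) (by nlinarith [sq_nonneg sh])
  nlinarith [m1, pos]

set_option maxHeartbeats 1000000 in
lemma key_ineq {n : ℕ} (hn : 2 ≤ n) {R : ℝ} (hR : 1 < R) {β : ℝ} (hβ0 : 0 < β) (hβπ : β < π) :
    (n:ℝ) * Real.sin β * ((1 + Real.cos (β/n)) * (R - Real.cos (β/n))) ≤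
      (R + 1) * Real.sin (β/n) * (cheb n R - Real.cos β) := by
  have hn2 : (2:ℝ) ≤ (n:ℝ) := by exact_mod_cast hn
  have hn0 : (0:ℝ) < (n:ℝ) := by linarith
  have hπ := Real.pi_pos
  obtain ⟨s, hs, hcs⟩ := exists_cosh_eq hR
  set w := s/2 with hwdef
  have hw0 : 0 < w := by positivity
  have hs2w : s = 2*w := by rw [hwdef]; ring
  have hR2 : R = 1 + 2 * Real.sinh w ^ 2 := by
    rw [← hcs, hs2w, Real.cosh_two_mul, Real.cosh_sq]; ring
  have hC : cheb n R = 1 + 2 * Real.sinh ((n:ℝ)*w) ^ 2 := by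
    rw [← hcs, hs2w, cheb_cosh, show (n:ℝ)*(2*w) = 2*((n:ℝ)*w) by ring,
      Real.cosh_two_mul, Real.cosh_sq]; ring
  set a := β/(2*(n:ℝ)) with hadef
  have ha0 : 0 < a := by positivity
  have hβeq : β = 2*((n:ℝ)*a) := by rw [hadef]; field_simp
  have hna : (n:ℝ)*a < π/2 := by
    have e : (n:ℝ)*a = β/2 := by rw [hadef]; field_simp
    rw [e]; linarith
  have haa : a ≤ (n:ℝ)*a := by
    nlinarith [mul_nonneg (by linarith : (0:ℝ) ≤ (n:ℝ)-1) ha0.le]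
  have h2na : 2*a ≤ (n:ℝ)*a := by
    nlinarith [mul_nonneg (by linarith : (0:ℝ) ≤ (n:ℝ)-2) ha0.le]
  have h2a : 2*a ≤ π := by linarith
  -- rewrite trig
  have hβn : β/(n:ℝ) = 2*a := by rw [hadef]; field_simp
  have hsinβ : Real.sin β = 2 * Real.sin ((n:ℝ)*a) * Real.cos ((n:ℝ)*a) := by
    rw [hβeq, Real.sin_two_mul]
  have hcosβ : Real.cos β = 1 - 2*Real.sin ((n:ℝ)*a)^2 := by
    rw [hβeq, Real.cos_two_mul', Real.cos_sq']; ring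
  have hcosd : Real.cos (β/(n:ℝ)) = 1 - 2*Real.sin a^2 := by
    rw [hβn, Real.cos_two_mul', Real.cos_sq']; ring
  have hsind : Real.sin (β/(n:ℝ)) = 2*Real.sin a*Real.cos a := by
    rw [hβn, Real.sin_two_mul]
  -- abbreviations
  set s₁ := Real.sin a
  set c₁ := Real.cos a
  set S := Real.sin ((n:ℝ)*a)
  set C := Real.cos ((n:ℝ)*a)
  set sh := Real.sinh w
  set SH := Real.sinh ((n:ℝ)*w)
  -- sign facts
  have hna0 : 0 < (n:ℝ)*a := mul_pos hn0 ha0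
  have hnw0 : 0 < (n:ℝ)*w := mul_pos hn0 hw0
  have hs₁ : 0 < s₁ := Real.sin_pos_of_pos_of_lt_pi ha0 (by linarith)
  have hc₁ : 0 < c₁ := Real.cos_pos_of_mem_Ioo ⟨by linarith, by linarith⟩
  have hS : 0 < S := Real.sin_pos_of_pos_of_lt_pi hna0 (by linarith)
  have hCpos : 0 < C := Real.cos_pos_of_mem_Ioo ⟨by linarith, hna⟩
  have hsh : 0 < sh := Real.sinh_pos_iff.mpr hw0
  have hSH : 0 < SH := Real.sinh_pos_iff.mpr hnw0
  have hc₁1 : c₁ ≤ 1 := Real.cos_le_one a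
  have hpy : s₁^2 + c₁^2 = 1 := Real.sin_sq_add_cos_sq a
  -- three main facts
  have F1 : S * C ≤ (n:ℝ) * (s₁ * c₁) := by
    have h := sin_nat_mul_le n (by linarith : (0:ℝ) ≤ 2*a) h2a
    have e : (n:ℝ) * (2*a) = 2*((n:ℝ)*a) := by ring
    rw [e, Real.sin_two_mul, Real.sin_two_mul] at h
    have h2 := le_trans (le_abs_self _) h
    linarith
  have F2 : (n:ℝ) * sh ≤ SH := nat_mul_sinh_le n hw0.le
  have F3 : (n:ℝ) * s₁ * C ≤ S * c₁ := nat_tan_superadd ha0.le n hna.le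
  -- two pieces
  have hA : (n:ℝ) * (S*C) * (c₁^2 * sh^2) ≤ (1 + sh^2) * (s₁*c₁) * SH^2 :=
    algA hs₁.le hc₁.le hc₁1 hsh.le hn0.le F1 F2
  have hB : (n:ℝ) * (S*C) * (c₁^2 * s₁^2) ≤ (1 + sh^2) * (s₁*c₁) * S^2 :=
    algB hs₁.le hc₁.le hc₁1 hS.le F3
  -- assemble
  have e1 : (1 + (1 - 2*s₁^2)) = 2*c₁^2 := by linear_combination -2*hpy
  have final : (n:ℝ) * (2*S*C) * ((1 + (1 - 2*s₁^2)) * ((1 + 2*sh^2) - (1 - 2*s₁^2))) ≤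
      ((1 + 2*sh^2) + 1) * (2*s₁*c₁) * ((1 + 2*SH^2) - (1 - 2*S^2)) := by
    rw [e1]
    linarith [hA, hB]
  rw [hsinβ, hcosβ, hcosd, hsind, hC, hR2]
  linarith [final]

set_option maxHeartbeats 1000000 in
lemma key_mono {n : ℕ} (hn : 2 ≤ n) {R : ℝ} (hR : 1 < R) {x y : ℝ}
    (hx : 0 < x) (hxy : x ≤ y) (hy : y < π) :
    (1 + Real.cos (y / n)) * (cheb n R - Real.cos y) / (R - Real.cos (y / n)) ≤
      (1 + Real.cos (x / n)) * (cheb n R - Real.cos x) / (R - Real.cos (x / n)) := by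
  have hπ := Real.pi_pos
  have hn2 : (2:ℝ) ≤ (n:ℝ) := by exact_mod_cast hn
  have hn0 : (0:ℝ) < (n:ℝ) := by linarith
  set C := cheb n R with hCdef
  set f : ℝ → ℝ := fun β => (1 + Real.cos (β / n)) * (C - Real.cos β) / (R - Real.cos (β / n))
    with hfdef
  have hden : ∀ β : ℝ, 0 < R - Real.cos (β / n) := fun β => by
    linarith [Real.cos_le_one (β / (n:ℝ))]
  have hanti : AntitoneOn f (Set.Icc 0 π) := by
    have hD : ∀ β ∈ Set.Ioo (0:ℝ) π, HasDerivAt f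
        ((((-Real.sin (β/n) * (1/n)) * (C - Real.cos β) +
          (1 + Real.cos (β/n)) * Real.sin β) * (R - Real.cos (β/n)) -
          (1 + Real.cos (β/n)) * (C - Real.cos β) * (Real.sin (β/n) * (1/n))) /
          (R - Real.cos (β/n))^2) β := by
      intro β _
      have h1 : HasDerivAt (fun b : ℝ => b / (n:ℝ)) (1/(n:ℝ)) β := by
        simpa using (hasDerivAt_id β).div_const (n:ℝ)
      have hcos1 : HasDerivAt (fun b : ℝ => Real.cos (b / n)) (-Real.sin (β/n) * (1/n)) β :=
        by have := (Real.hasDerivAt_cos (β/(n:ℝ))).comp β h1; exact this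
      have hu : HasDerivAt (fun b : ℝ => 1 + Real.cos (b / n)) (-Real.sin (β/n) * (1/n)) β :=
        hcos1.const_add 1
      have hv : HasDerivAt (fun b : ℝ => C - Real.cos b) (Real.sin β) β := by
        simpa using (Real.hasDerivAt_cos β).const_sub C
      have hd : HasDerivAt (fun b : ℝ => R - Real.cos (b / n)) (Real.sin (β/n) * (1/n)) β := by
        simpa using hcos1.const_sub R
      have := (hu.mul hv).div hd (hden β).ne'
      convert this using 1
      all_goals rfl
    apply antitoneOn_of_deriv_nonpos (convex_Icc 0 π)
    · apply ContinuousOn.div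
      · exact ((continuous_const.add (Real.continuous_cos.comp (continuous_id.div_const _))).mul
          (continuous_const.sub Real.continuous_cos)).continuousOn
      · exact (continuous_const.sub (Real.continuous_cos.comp (continuous_id.div_const _))).continuousOn
      · exact fun β _ => (hden β).ne'
    · rw [interior_Icc]
      exact fun β hβ => ((hD β hβ).differentiableAt).differentiableWithinAt
    · rw [interior_Icc]
      intro β hβ
      rw [(hD β hβ).deriv]
      apply div_nonpos_of_nonpos_of_nonneg _ (sq_nonneg _)
      have hKI := key_ineq hn hR hβ.1 hβ.2
      rw [← hCdef] at hKI
      have hnne : (n:ℝ) ≠ 0 := hn0.ne'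
      have e : (-Real.sin (β/n) * (1/n) * (C - Real.cos β) +
            (1 + Real.cos (β/n)) * Real.sin β) * (R - Real.cos (β/n)) -
            (1 + Real.cos (β/n)) * (C - Real.cos β) * (Real.sin (β/n) * (1/n))
          = (1/(n:ℝ)) * ((n:ℝ) * Real.sin β * ((1 + Real.cos (β/n)) * (R - Real.cos (β/n)))
            - (R + 1) * Real.sin (β/n) * (C - Real.cos β)) := by
        field_simp
        ring
      rw [e]
      apply mul_nonpos_iff.mpr
      left
      exact ⟨by positivity, by linarith⟩
  have h1 : x ∈ Set.Icc (0:ℝ) π := ⟨hx.le, by linarith⟩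
  have h2 : y ∈ Set.Icc (0:ℝ) π := ⟨by linarith, hy.le⟩
  exact hanti h1 h2 hxy

theorem tree_exchange (θ : ℝ) (hθ : 1 < θ) (α : ℝ) (hα : α ∈ Set.Ioo 0 (π / 2))
    (n r : ℕ) (hn : 2 ≤ n) (hr : 1 ≤ r) :
    skewBound θ (n * r) α * skewBound θ r ((π - α) / n) ≤
      skewBound θ (n * r) (π - α) * skewBound θ r (α / n) := by
  obtain ⟨hα0, hα2⟩ := hα
  have hπ := Real.pi_pos
  have hn2 : (2:ℝ) ≤ (n:ℝ) := by exact_mod_cast hn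
  have hnr : 1 ≤ n * r := le_trans (by norm_num) (Nat.mul_le_mul hn hr)
  have hR : 1 < cheb r θ := one_lt_cheb hθ hr
  have hN : 1 < cheb (n * r) θ := one_lt_cheb hθ hnr
  have hNC : cheb (n * r) θ = cheb n (cheb r θ) := cheb_mul n r θ
  have hca : 0 < Real.cos α := Real.cos_pos_of_mem_Ioo ⟨by linarith, hα2⟩
  have hcpa : Real.cos (π - α) = -Real.cos α := Real.cos_pi_sub α
  have hv2 : (π - α)/(n:ℝ) < π/2 := by
    have : (π - α)/(n:ℝ) ≤ (π - α)/2 :=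
      div_le_div_of_nonneg_left (by linarith) (by norm_num) hn2
    linarith
  have hv0 : 0 < (π - α)/(n:ℝ) := div_pos (by linarith) (by linarith)
  have hu0 : 0 < α/(n:ℝ) := div_pos hα0 (by linarith)
  have hu2 : α/(n:ℝ) < π/2 := by
    have : α/(n:ℝ) ≤ α/2 := div_le_div_of_nonneg_left (by linarith) (by norm_num) hn2
    linarith
  have hcv0 : 0 < Real.cos ((π - α)/n) := Real.cos_pos_of_mem_Ioo ⟨by linarith, hv2⟩
  have hcu0 : 0 < Real.cos (α/n) := Real.cos_pos_of_mem_Ioo ⟨by linarith, hu2⟩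
  unfold skewBound
  rw [skewBound_eq hθ hnr α, skewBound_eq hθ hnr (π - α), skewBound_eq hθ hr ((π - α)/n),
    skewBound_eq hθ hr (α/n), hcpa, abs_neg, abs_of_pos hca, abs_of_pos hcv0, abs_of_pos hcu0,
    sub_neg_eq_add]
  -- key monotonicity
  have hkey := key_mono (R := cheb r θ) hn hR hα0 (by linarith : α ≤ π - α) (by linarith : π - α < π)
  rw [hcpa, ← hNC, sub_neg_eq_add] at hkey
  -- abbreviations and positivity
  set N := cheb (n * r) θ
  set R := cheb r θ
  set c := Real.cos α
  set cv := Real.cos ((π - α)/n)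
  set cu := Real.cos (α/n)
  have hc1 : c ≤ 1 := Real.cos_le_one α
  have hcv1 : cv ≤ 1 := Real.cos_le_one _
  have hcu1 : cu ≤ 1 := Real.cos_le_one _
  have hcvm : -1 ≤ cv := Real.neg_one_le_cos _
  have hcum : -1 ≤ cu := Real.neg_one_le_cos _
  have hNm : 0 < N - c := by linarith
  have hNp : 0 < N + c := by linarith
  have hRv : 0 < R - cv := by linarith
  have hRu : 0 < R - cu := by linarith
  have h1c : 0 < 1 + c := by linarith
  have h1v : 0 < 1 + cv := by linarith
  have h1u : 0 < 1 + cu := by linarith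
  rw [div_le_div_iff₀ hRv hRu] at hkey
  rw [div_mul_div_comm, div_mul_div_comm, div_le_div_iff₀ (mul_pos hNm hRv) (mul_pos hNp hRu)]
  nlinarith [mul_le_mul_of_nonneg_left hkey h1c.le]
end
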